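/- The function h(λ') = 1 + 2/λ' − √(2/λ') (the σ'→∞ limit of the limiting mismatched MSE formula for σ = 1, λ = 2) is strictly decreasing on (0,8), strictly increasing on (8,∞), and attains its minimum value 3/4 at λ' = 8; moreover 3/4 = MMSE∞(1,2), the limiting Bayes-optimal MMSE at σ = 1, λ = 2. -/

import Mathlib

/-!
With `t = √(2/λ')` one has `h(λ') = t² - t + 1 = (t - 1/2)² + 3/4`. The map `λ' ↦ t` is strictly
decreasing and crosses `t = 1/2` exactly at `λ' = 8`, while the parabola decreases left of `1/2`
and increases right of it; so `h` falls on `(0, 8)`, rises on `(8, ∞)` and its minimum is `3/4`.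
-/

open MeasureTheory ProbabilityTheory Filter Matrix

noncomputable section

/-- The limiting MMSE formula. -/
def MMSElim (sig lam : ℝ) : ℝ :=
  if lam ≤ 1 / sig ^ 4 then sig ^ 4 else 2 / lam - 1 / (lam ^ 2 * sig ^ 4)

open Set

lemma StrictAntiOn.comp_strictAntiOn {α β γ : Type*} [Preorder α] [Preorder β] [Preorder γ]
    {g : β → γ} {f : α → β} {s : Set α} {t : Set β} (hg : StrictAntiOn g t)
    (hf : StrictAntiOn f s) (hs : MapsTo f s t) : StrictMonoOn (g ∘ f) s :=
  fun _ ha _ hb hab => hg (hs hb) (hs ha) (hf ha hb hab)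

lemma sq_sub_self_add_one_eq (t : ℝ) : t ^ 2 - t + 1 = (t - 1 / 2) ^ 2 + 3 / 4 := by ring

lemma strictMonoOn_sq_sub_self_add_one : StrictMonoOn (fun t : ℝ => t ^ 2 - t + 1) (Ici (1 / 2)) :=
  fun a ha b _ hab => by
    have ha : (1 : ℝ) / 2 ≤ a := ha
    nlinarith

lemma strictAntiOn_sq_sub_self_add_one : StrictAntiOn (fun t : ℝ => t ^ 2 - t + 1) (Iic (1 / 2)) :=
  fun a _ b hb hab => by
    have hb : b ≤ (1 : ℝ) / 2 := hb
    nlinarith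

lemma strictAntiOn_sqrt_div {c : ℝ} (hc : 0 < c) : StrictAntiOn (fun x : ℝ => √(c / x)) (Ioi 0) :=
  fun a (ha : 0 < a) _ _ hab =>
    Real.sqrt_lt_sqrt (div_pos hc (ha.trans hab)).le (div_lt_div_of_pos_left hc ha hab)

lemma add_sub_sqrt_eq_sq_sub_self_add_one {x : ℝ} (hx : 0 ≤ x) :
    1 + x - √x = √x ^ 2 - √x + 1 := by
  rw [Real.sq_sqrt hx]
  ring

lemma eqOn_one_add_two_div_sub_sqrt :
    EqOn ((fun t : ℝ => t ^ 2 - t + 1) ∘ fun l : ℝ => √(2 / l))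
      (fun l : ℝ => 1 + 2 / l - √(2 / l)) (Ioi 0) :=
  fun _ hl => (add_sub_sqrt_eq_sq_sub_self_add_one (div_pos two_pos hl).le).symm

/-- The function `h(λ') = 1 + 2/λ' − √(2/λ')` is strictly
decreasing on `(0,8)`, strictly increasing on `(8,∞)`, attains its minimum `3/4`
at `λ' = 8`, and `3/4 = MMSE∞(1,2)`. -/
theorem limit_curve_min_at_eight :
    StrictAntiOn (fun l' : ℝ => 1 + 2 / l' - Real.sqrt (2 / l')) (Set.Ioo 0 8) ∧
      StrictMonoOn (fun l' : ℝ => 1 + 2 / l' - Real.sqrt (2 / l')) (Set.Ioi 8) ∧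
      (1 + 2 / (8 : ℝ) - Real.sqrt (2 / 8) = 3 / 4) ∧
      (∀ l' : ℝ, 0 < l' → (3 : ℝ) / 4 ≤ 1 + 2 / l' - Real.sqrt (2 / l')) ∧
      MMSElim 1 2 = 3 / 4 := by
  have hsqrt := strictAntiOn_sqrt_div two_pos
  refine ⟨?_, ?_, ?_, fun l hl => ?_, by norm_num [MMSElim]⟩
  · have hmaps : MapsTo (fun l : ℝ => √(2 / l)) (Ioo 0 8) (Ici (1 / 2)) := fun l ⟨hl0, hl8⟩ =>
      ((Real.lt_sqrt (by norm_num)).2 <| by rw [lt_div_iff₀ hl0]; linarith).le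
    exact (strictMonoOn_sq_sub_self_add_one.comp_strictAntiOn (hsqrt.mono Ioo_subset_Ioi_self)
      hmaps).congr (eqOn_one_add_two_div_sub_sqrt.mono Ioo_subset_Ioi_self)
  · have hpos : Ioi (8 : ℝ) ⊆ Ioi 0 := Ioi_subset_Ioi (by norm_num)
    have hmaps : MapsTo (fun l : ℝ => √(2 / l)) (Ioi 8) (Iic (1 / 2)) := fun l (hl : 8 < l) =>
      ((Real.sqrt_lt' (by norm_num)).2 <| by rw [div_lt_iff₀ (by linarith)]; linarith).le
    exact (strictAntiOn_sq_sub_self_add_one.comp_strictAntiOn (hsqrt.mono hpos)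
      hmaps).congr (eqOn_one_add_two_div_sub_sqrt.mono hpos)
  · rw [show (2 : ℝ) / 8 = (1 / 2) ^ 2 by norm_num, Real.sqrt_sq (by norm_num)]
    norm_num
  · rw [add_sub_sqrt_eq_sq_sub_self_add_one (by positivity), sq_sub_self_add_one_eq]
    exact le_add_of_nonneg_left (sq_nonneg _)

end
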